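/- arXiv:1312.6373 — 4 statements merged into one kernel-verified Lean document; each statement's English description precedes it below -/
import Mathlib

section
/- Let Γ be a group acting on the left on a nonempty set X, and let ψ : Γ → (X → ℝ) be a family of functions with ψ_e = 0 such that for all γ, μ ∈ Γ the function x ↦ ψ_μ(x) + ψ_γ(μ•x) − ψ_{γμ}(x) is constant on X; fix x₀ ∈ X and let σ(γ,μ) := exp(i(ψ_μ(x₀) + ψ_γ(μ•x₀) − ψ_{γμ}(x₀))). Let h : X → ℝ and set ψ'_γ(x) := ψ_γ(x) + h(γ•x) − h(x). Then ψ' again satisfies ψ'_e = 0 and the constancy hypothesis, and the multiplier σ' defined from ψ' equals σ: σ'(γ,μ) = σ(γ,μ) for all γ, μ ∈ Γ. -/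
/-- With `σ` the multiplier defined from `ψ` and base point `x₀`,
replacing `ψ_γ(x)` by `ψ'_γ(x) = ψ_γ(x) + h(γ•x) − h(x)` for any `h : X → ℝ`
preserves `ψ'_e = 0` and the constancy hypothesis, and leaves the multiplier
unchanged: `σ' = σ`. -/
theorem geometric_multiplier_gauge_invariance {Γ X : Type*} [Group Γ]
    [MulAction Γ X]
    (ψ : Γ → X → ℝ) (hψe : ψ 1 = 0)
    (hconst : ∀ (γ μ : Γ) (x y : X),
      ψ μ x + ψ γ (μ • x) - ψ (γ * μ) x = ψ μ y + ψ γ (μ • y) - ψ (γ * μ) y)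
    (x₀ : X)
    (h : X → ℝ)
    (ψ' : Γ → X → ℝ) (hψ' : ∀ (γ : Γ) (x : X), ψ' γ x = ψ γ x + h (γ • x) - h x)
    (σ σ' : Γ → Γ → ℂ)
    (hσdef : ∀ γ μ : Γ,
      σ γ μ = Complex.exp (Complex.I *
        ((ψ μ x₀ + ψ γ (μ • x₀) - ψ (γ * μ) x₀ : ℝ) : ℂ)))
    (hσ'def : ∀ γ μ : Γ,
      σ' γ μ = Complex.exp (Complex.I *
        ((ψ' μ x₀ + ψ' γ (μ • x₀) - ψ' (γ * μ) x₀ : ℝ) : ℂ))) :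
    (∀ x : X, ψ' 1 x = 0) ∧
    (∀ (γ μ : Γ) (x y : X),
      ψ' μ x + ψ' γ (μ • x) - ψ' (γ * μ) x
        = ψ' μ y + ψ' γ (μ • y) - ψ' (γ * μ) y) ∧
    (∀ γ μ : Γ, σ' γ μ = σ γ μ) := by
  have key : ∀ (γ μ : Γ) (x : X),
      ψ' μ x + ψ' γ (μ • x) - ψ' (γ * μ) x
        = ψ μ x + ψ γ (μ • x) - ψ (γ * μ) x := by
    intro γ μ x
    simp only [hψ', mul_smul]
    ring
  refine ⟨?_, ?_, ?_⟩
  · intro x; simp [hψ', hψe]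
  · intro γ μ x y; rw [key, key]; exact hconst γ μ x y
  · intro γ μ; rw [hσdef, hσ'def, key]
end

section
/- Let π : Γ → H be a surjective group homomorphism with kernel G, σ a multiplier on H, and π*σ the pullback multiplier on Γ given by (π*σ)(γ,γ') = σ(π(γ),π(γ')). Let u : Γ → U(n) be a unitary representation of Γ on ℂⁿ. Define the linear functional τ^σ_{u,H} on the twisted group algebra ℂ(Γ,π*σ) by τ^σ_{u,H}(f) := Σ_{γ ∈ G} f(γ)·Tr(u(γ)). Then: (1) τ^σ_{u,H} is a trace, i.e. τ^σ_{u,H}(f*g) = τ^σ_{u,H}(g*f) for the twisted convolution with respect to π*σ; and (2) if every group homomorphism χ : Γ → U(1) restricts to the trivial homomorphism on G, then τ^σ_{u,H}(χ·f) = τ^σ_{u,H}(f) for every group homomorphism χ : Γ → U(1), where (χ·f)(γ) = χ(γ)f(γ); i.e. τ^σ_{u,H} is invariant under projective automorphisms. -/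
/-- The twisted convolution product on finitely supported functions `Γ →₀ ℂ`. -/
noncomputable def twistedConv {Γ : Type*} [Group Γ] (σ : Γ → Γ → ℂ)
    (f g : Γ →₀ ℂ) : Γ →₀ ℂ :=
  f.sum fun a ca => g.sum fun b cb => Finsupp.single (a * b) (ca * cb * σ a b)

/-- Pointwise multiplication of a finitely supported function by `χ`. -/
noncomputable def chiMul {α : Type*} (χ : α → ℂ) (f : α →₀ ℂ) : α →₀ ℂ :=
  f.sum fun a c => Finsupp.single a (χ a * c)

/-- The functional `τ^σ_{u,H}(f) = ∑_{γ ∈ ker π} f(γ)·Tr(u(γ))` on the twisted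
group algebra of `Γ`. -/
noncomputable def kerTrace {Γ H : Type*} [Group Γ] [Group H] [DecidableEq H]
    {n : ℕ} (π : Γ →* H) (u : Γ → Matrix (Fin n) (Fin n) ℂ)
    (f : Γ →₀ ℂ) : ℂ :=
  f.sum fun γ c => if π γ = 1 then c * (u γ).trace else 0

/-- Let `π : Γ → H` be a surjective group homomorphism with kernel
`G`, `σ` a multiplier on `H`, `π*σ` the pullback multiplier on `Γ`, and
`u : Γ → U(n)` a unitary representation.  Then
`τ^σ_{u,H}(f) = ∑_{γ ∈ G} f(γ)·Tr(u(γ))` is a trace on `ℂ(Γ,π*σ)`, and if every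
group homomorphism `χ : Γ → U(1)` is trivial on `G`, then `τ^σ_{u,H}` is
invariant under all projective automorphisms `b_χ`. -/
theorem kerTrace_is_invariant_trace {Γ H : Type*} [Group Γ] [Group H]
    [DecidableEq H] {n : ℕ}
    (π : Γ →* H) (hπ : Function.Surjective π)
    (σ : H → H → ℂ)
    (hσnorm : ∀ h₁ h₂, ‖σ h₁ h₂‖ = 1)
    (hσone : ∀ h : H, σ 1 h = 1 ∧ σ h 1 = 1)
    (hσcoc : ∀ h₁ h₂ h₃ : H,
      σ (h₁ * h₂) h₃ * σ h₁ h₂ = σ h₁ (h₂ * h₃) * σ h₂ h₃)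
    (u : Γ → Matrix (Fin n) (Fin n) ℂ)
    (hu1 : u 1 = 1)
    (humul : ∀ γ γ' : Γ, u (γ * γ') = u γ * u γ')
    (huU : ∀ γ : Γ, u γ ∈ Matrix.unitaryGroup (Fin n) ℂ) :
    (∀ f g : Γ →₀ ℂ,
      kerTrace π u (twistedConv (fun γ γ' => σ (π γ) (π γ')) f g)
        = kerTrace π u (twistedConv (fun γ γ' => σ (π γ) (π γ')) g f)) ∧
    ((∀ χ : Γ →* ℂ, (∀ γ, ‖χ γ‖ = 1) → ∀ γ ∈ π.ker, χ γ = 1) →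
      ∀ χ : Γ →* ℂ, (∀ γ, ‖χ γ‖ = 1) →
        ∀ f : Γ →₀ ℂ, kerTrace π u (chiMul (fun γ => χ γ) f) = kerTrace π u f) := by
  classical
  -- σ(h, h⁻¹) = σ(h⁻¹, h)
  have hσsym : ∀ h : H, σ h h⁻¹ = σ h⁻¹ h := by
    intro h
    have := hσcoc h h⁻¹ h
    simpa [(hσone h).1, (hσone h).2, (hσone h⁻¹).1, (hσone h⁻¹).2] using this
  have key : ∀ f g : Γ →₀ ℂ,
      kerTrace π u (twistedConv (fun γ γ' => σ (π γ) (π γ')) f g)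
        = f.sum fun a ca => g.sum fun b cb =>
            if π (a * b) = 1 then ca * cb * σ (π a) (π b) * (u (a * b)).trace
            else 0 := by
    intro f g
    unfold kerTrace twistedConv
    rw [Finsupp.sum_sum_index (fun i => by simp) (fun i b₁ b₂ => by split <;> ring)]
    refine Finsupp.sum_congr fun a _ => ?_
    rw [Finsupp.sum_sum_index (fun i => by simp) (fun i b₁ b₂ => by split <;> ring)]
    refine Finsupp.sum_congr fun b _ => ?_
    rw [Finsupp.sum_single_index (by simp)]
  constructor
  · intro f g
    rw [key, key, Finsupp.sum_comm]
    refine Finsupp.sum_congr fun a _ => Finsupp.sum_congr fun b _ => ?_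
    by_cases h : π a * π b = 1
    · have h1 : π (a * b) = 1 := by simp [map_mul, h]
      have hb : π b = (π a)⁻¹ := eq_inv_of_mul_eq_one_right h
      have h2 : π (b * a) = 1 := by
        simp [map_mul, hb]
      rw [if_pos h1, if_pos h2, humul a b, humul b a, Matrix.trace_mul_comm,
        hb, hσsym]
      ring
    · have h1 : ¬ π (a * b) = 1 := by simpa [map_mul] using h
      have h2 : ¬ π (b * a) = 1 := by
        simp only [map_mul]
        intro hc
        exact h (by
          have : π a = (π b)⁻¹ := eq_inv_of_mul_eq_one_right hc
          simp [this])
      rw [if_neg h1, if_neg h2]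
  · intro htriv χ hχ f
    unfold kerTrace chiMul
    rw [Finsupp.sum_sum_index (fun i => by simp) (fun i b₁ b₂ => by split <;> ring)]
    refine Finsupp.sum_congr fun γ _ => ?_
    rw [Finsupp.sum_single_index (by simp)]
    by_cases h : π γ = 1
    · have h1 := htriv χ hχ γ (MonoidHom.mem_ker.mpr h)
      rw [if_pos h, if_pos h]
      simp [h1]
    · rw [if_neg h, if_neg h]
end

section
/- Let Γ be a group, σ a multiplier on Γ, and n ∈ ℕ. For a tuple (γ₀,…,γ_m) ∈ Γ^{m+1} let T_σ(γ₀,…,γ_m) := tr^σ_{(2)}(δ_{γ₀}*δ_{γ₁}*⋯*δ_{γ_m}), which equals the product ∏_{j=1}^{m} σ(γ₀γ₁⋯γ_{j−1}, γ_j) if γ₀γ₁⋯γ_m = e and 0 otherwise. For τ : Γ^{n+1} → ℂ define τ^σ : Γ^{n+1} → ℂ by τ^σ(γ₀,…,γ_n) := T_σ(γ₀,…,γ_n)·τ(γ₀,…,γ_n), and define the twisted cyclic coboundary B_σ taking τ : Γ^{n+1} → ℂ to B_στ : Γ^{n+2} → ℂ by (B_στ)(γ₀,…,γ_{n+1}) =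 (−1)^{n+1}·σ(γ_{n+1},γ₀)·τ(γ_{n+1}γ₀, γ₁,…,γ_n) + Σ_{i=0}^{n} (−1)^i·σ(γ_i,γ_{i+1})·τ(γ₀,…,γ_iγ_{i+1},…,γ_{n+1}). Then B_σ(τ^σ) = (B_1 τ)^σ, where B_1 denotes the same coboundary with the trivial multiplier σ ≡ 1. That is, the map τ ↦ τ^σ is a chain map, realizing the isomorphism between the group cochain complex of Γ and the complex of reduced cyclic cochains on ℂ(Γ,σ) localized at the identity. -/
/-- The iterated twisted convolution `δ_{γ₀} * δ_{γ₁} * ⋯ * δ_{γ_m}` of delta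
functions (starting from the unit `δ_e`). -/
noncomputable def deltaConvProd {Γ : Type*} [Group Γ] (σ : Γ → Γ → ℂ)
    (l : List Γ) : Γ →₀ ℂ :=
  l.foldl (fun acc a => twistedConv σ acc (Finsupp.single a (1 : ℂ)))
    (Finsupp.single (1 : Γ) (1 : ℂ))

/-- `T_σ(γ₀,…,γ_m) = tr^σ_{(2)}(δ_{γ₀} * δ_{γ₁} * ⋯ * δ_{γ_m})`. -/
noncomputable def Tsigma {Γ : Type*} [Group Γ] (σ : Γ → Γ → ℂ)
    (m : ℕ) (g : Fin (m + 1) → Γ) : ℂ :=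
  deltaConvProd σ (List.ofFn g) 1

/-- The twist `τ^σ(γ₀,…,γ_n) = T_σ(γ₀,…,γ_n) · τ(γ₀,…,γ_n)` of a cochain. -/
noncomputable def twistCochain {Γ : Type*} [Group Γ] (σ : Γ → Γ → ℂ)
    (n : ℕ) (τ : (Fin (n + 1) → Γ) → ℂ) : (Fin (n + 1) → Γ) → ℂ :=
  fun g => Tsigma σ n g * τ g

/-- The twisted cyclic coboundary `B_σ`. -/
noncomputable def cycCoboundary {Γ : Type*} [Group Γ] (σ : Γ → Γ → ℂ)
    (n : ℕ) (τ : (Fin (n + 1) → Γ) → ℂ) : (Fin (n + 2) → Γ) → ℂ :=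
  fun g =>
    (-1 : ℂ) ^ (n + 1) * σ (g (Fin.last (n + 1))) (g 0) *
      τ (Fin.cons (g (Fin.last (n + 1)) * g 0)
          (fun j : Fin n => g j.succ.castSucc))
    + ∑ i : Fin (n + 1), (-1 : ℂ) ^ (i : ℕ) * σ (g i.castSucc) (g i.succ) *
        τ (fun k : Fin (n + 1) =>
            if (k : ℕ) < (i : ℕ) then g k.castSucc
            else if (k : ℕ) = (i : ℕ) then g i.castSucc * g i.succ
            else g k.succ)

/-!
Expanding the iterated twisted convolution shows `δ_{γ₀} * ⋯ * δ_{γ_m} = W · δ_{γ₀⋯γ_m}`, where the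
weight `W` is the product of the multiplier along the partial products. The cocycle identity
says exactly that merging two adjacent entries `a, b` of a list into `ab` divides `W` by
`σ(a, b)`; this matches the inner face terms of `B_σ` one by one. For the cyclic face only
tuples with `x := γ₀⋯γ_n = γ_{n+1}⁻¹` matter; moving `γ_{n+1}` to the front and merging it into
`γ₀` changes `W` by `σ(x, x⁻¹) / σ(x⁻¹, x)`, which is `1` by the cocycle identity at `(x, x⁻¹, x)`.
-/

section Lists

variable {α : Type*}

theorem List.ofFn_eq_take_append_cons_cons {m : ℕ} (g : Fin (m + 2) → α) (i : Fin (m + 1)) :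
    List.ofFn g
      = (List.ofFn g).take i ++ g i.castSucc :: g i.succ :: (List.ofFn g).drop (i + 2) := by
  apply List.ext_getElem (by simp; omega)
  intro k _ _
  simp only [List.getElem_append, List.getElem_cons, List.length_take, List.length_ofFn,
    List.getElem_take, List.getElem_drop, List.getElem_ofFn]
  split_ifs <;> congr 1 <;> ext <;> simp <;> omega

theorem List.ofFn_face [Mul α] {m : ℕ} (g : Fin (m + 2) → α) (i : Fin (m + 1)) :
    List.ofFn (fun k : Fin (m + 1) =>
          if (k : ℕ) < (i : ℕ) then g k.castSucc
          else if (k : ℕ) = (i : ℕ) then g i.castSucc * g i.succ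
          else g k.succ)
      = (List.ofFn g).take i ++ (g i.castSucc * g i.succ) :: (List.ofFn g).drop (i + 2) := by
  apply List.ext_getElem (by simp; omega)
  intro k _ _
  simp only [List.getElem_append, List.getElem_cons, List.length_take, List.length_ofFn,
    List.getElem_take, List.getElem_drop, List.getElem_ofFn]
  split_ifs <;> first | omega | (congr 1 <;> ext <;> simp <;> omega)

theorem List.ofFn_eq_cons_append_singleton {n : ℕ} (g : Fin (n + 2) → α) :
    List.ofFn g
      = g 0 :: List.ofFn (fun j : Fin n => g j.succ.castSucc) ++ [g (Fin.last (n + 1))] := by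
  rw [List.ofFn_succ', List.ofFn_succ]
  simp [-Fin.castSucc_succ]

end Lists

section Twist

variable {Γ : Type*} [Group Γ] (σ : Γ → Γ → ℂ)

def cocycleWeight : Γ → List Γ → ℂ
  | _, [] => 1
  | p, a :: t => σ p a * cocycleWeight (p * a) t

theorem twistedConv_single_single (p a : Γ) (c d : ℂ) :
    twistedConv σ (Finsupp.single p c) (Finsupp.single a d)
      = Finsupp.single (p * a) (c * d * σ p a) := by
  unfold twistedConv
  rw [Finsupp.sum_single_index, Finsupp.sum_single_index]
  · simp
  · rw [Finsupp.sum_single_index] <;> simp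

theorem foldl_twistedConv_single (l : List Γ) (p : Γ) (c : ℂ) :
    l.foldl (fun acc a => twistedConv σ acc (Finsupp.single a 1)) (Finsupp.single p c)
      = Finsupp.single (p * l.prod) (c * cocycleWeight σ p l) := by
  induction l generalizing p c with
  | nil => simp [cocycleWeight]
  | cons a t ih =>
    simp only [List.foldl_cons, twistedConv_single_single, ih, cocycleWeight, List.prod_cons,
      mul_assoc, one_mul]

theorem deltaConvProd_eq_single (l : List Γ) :
    deltaConvProd σ l = Finsupp.single l.prod (cocycleWeight σ 1 l) := by
  rw [deltaConvProd, foldl_twistedConv_single, one_mul, one_mul]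

theorem Tsigma_eq_ite [DecidableEq Γ] (m : ℕ) (g : Fin (m + 1) → Γ) :
    Tsigma σ m g
      = if (List.ofFn g).prod = 1 then cocycleWeight σ 1 (List.ofFn g) else 0 := by
  rw [Tsigma, deltaConvProd_eq_single, Finsupp.single_apply]

theorem cocycleWeight_ofFn {m : ℕ} (g : Fin m → Γ) (p : Γ) :
    cocycleWeight σ p (List.ofFn g)
      = ∏ j : Fin m, σ (p * ((List.ofFn g).take j).prod) (g j) := by
  induction m generalizing p with
  | zero => simp [cocycleWeight]
  | succ m ih =>
    simp only [List.ofFn_succ, Fin.prod_univ_succ, cocycleWeight, ih, Fin.val_zero, Fin.val_succ,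
      List.take_zero, List.take_succ_cons, List.prod_nil, List.prod_cons, mul_one, mul_assoc]

theorem cocycleWeight_append_singleton (l : List Γ) (p a : Γ) :
    cocycleWeight σ p (l ++ [a]) = cocycleWeight σ p l * σ (p * l.prod) a := by
  induction l generalizing p with
  | nil => simp [cocycleWeight]
  | cons c t ih => simp only [List.cons_append, cocycleWeight, List.prod_cons, ih, mul_assoc]

section Cocycle

variable {σ}
variable (hσcoc : ∀ γ₁ γ₂ γ₃ : Γ, σ (γ₁ * γ₂) γ₃ * σ γ₁ γ₂ = σ γ₁ (γ₂ * γ₃) * σ γ₂ γ₃)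
include hσcoc

theorem cocycleWeight_merge (l₁ l₂ : List Γ) (p a b : Γ) :
    σ a b * cocycleWeight σ p (l₁ ++ (a * b) :: l₂)
      = cocycleWeight σ p (l₁ ++ a :: b :: l₂) := by
  induction l₁ generalizing p with
  | nil =>
    simp only [List.nil_append, cocycleWeight, ← mul_assoc p a b]
    linear_combination (-cocycleWeight σ (p * a * b) l₂) * hσcoc p a b
  | cons c t ih =>
    simp only [List.cons_append, cocycleWeight, ← ih]
    ring

theorem cocycleWeight_mul_base (l : List Γ) (a p : Γ) :
    σ a p * cocycleWeight σ (a * p) l = σ a (p * l.prod) * cocycleWeight σ p l := by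
  induction l generalizing p with
  | nil => simp [cocycleWeight]
  | cons b t ih =>
    have ih' := ih (p * b)
    simp only [cocycleWeight, List.prod_cons, mul_assoc] at ih' ⊢
    linear_combination cocycleWeight σ (a * (p * b)) t * hσcoc a p b + σ p b * ih'

theorem multiplier_mul_inv_eq_inv_mul (hσone : ∀ γ : Γ, σ 1 γ = 1 ∧ σ γ 1 = 1) (x : Γ) :
    σ x x⁻¹ = σ x⁻¹ x := by
  simpa [(hσone x).1, (hσone x).2] using hσcoc x x⁻¹ x

theorem cocycleWeight_rotate (hσone : ∀ γ : Γ, σ 1 γ = 1 ∧ σ γ 1 = 1) (a b : Γ) (l : List Γ)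
    (h : b * l.prod * a = 1) :
    σ a b * cocycleWeight σ 1 ((a * b) :: l) = cocycleWeight σ 1 (b :: l ++ [a]) := by
  obtain rfl : a = (b * l.prod)⁻¹ := eq_inv_of_mul_eq_one_right h
  simp only [List.cons_append, cocycleWeight, (hσone _).1, one_mul]
  rw [cocycleWeight_mul_base hσcoc, cocycleWeight_append_singleton,
    ← multiplier_mul_inv_eq_inv_mul hσcoc hσone, mul_comm]

variable [DecidableEq Γ]

theorem Tsigma_face (n : ℕ) (g : Fin (n + 2) → Γ) (i : Fin (n + 1)) :
    σ (g i.castSucc) (g i.succ) * Tsigma σ n (fun k : Fin (n + 1) =>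
        if (k : ℕ) < (i : ℕ) then g k.castSucc
        else if (k : ℕ) = (i : ℕ) then g i.castSucc * g i.succ
        else g k.succ)
      = Tsigma σ (n + 1) g := by
  rw [Tsigma_eq_ite, Tsigma_eq_ite, List.ofFn_eq_take_append_cons_cons g i, List.ofFn_face]
  have hprod : ∀ l₁ l₂ : List Γ, (l₁ ++ (g i.castSucc * g i.succ) :: l₂).prod
      = (l₁ ++ g i.castSucc :: g i.succ :: l₂).prod := by
    simp [mul_assoc]
  rw [hprod]
  split_ifs
  · exact cocycleWeight_merge hσcoc _ _ 1 _ _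
  · exact mul_zero _

theorem Tsigma_cyclicFace (hσone : ∀ γ : Γ, σ 1 γ = 1 ∧ σ γ 1 = 1) (n : ℕ)
    (g : Fin (n + 2) → Γ) :
    σ (g (Fin.last (n + 1))) (g 0) *
      Tsigma σ n (Fin.cons (g (Fin.last (n + 1)) * g 0) (fun j : Fin n => g j.succ.castSucc))
      = Tsigma σ (n + 1) g := by
  rw [Tsigma_eq_ite, Tsigma_eq_ite, List.ofFn_succ, List.ofFn_eq_cons_append_singleton g]
  simp only [Fin.cons_zero, Fin.cons_succ]
  set a := g (Fin.last (n + 1))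
  set l := List.ofFn (fun j : Fin n => g j.succ.castSucc)
  have hprod : ((a * g 0) :: l).prod = 1 ↔ (g 0 :: l ++ [a]).prod = 1 := by
    simp only [List.cons_append, List.prod_cons, List.prod_append, List.prod_nil, mul_one]
    rw [mul_assoc, ← mul_assoc (g 0)]
    exact mul_eq_one_comm
  split_ifs with h₁ h₂ h₂
  · exact cocycleWeight_rotate hσcoc hσone a (g 0) l (by simpa [mul_assoc] using h₂)
  · exact absurd (hprod.mp h₁) h₂
  · exact absurd (hprod.mpr h₂) h₁
  · exact mul_zero _

end Cocycle

theorem Tsigma_eq_prod [DecidableEq Γ] (hσone : ∀ γ : Γ, σ 1 γ = 1 ∧ σ γ 1 = 1)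
    (m : ℕ) (g : Fin (m + 1) → Γ) :
    Tsigma σ m g
      = if (List.ofFn g).prod = 1
        then ∏ j : Fin m, σ (((List.ofFn g).take ((j : ℕ) + 1)).prod) (g j.succ)
        else 0 := by
  rw [Tsigma_eq_ite, cocycleWeight_ofFn, Fin.prod_univ_succ]
  simp only [Fin.val_zero, List.take_zero, List.prod_nil, mul_one, (hσone _).1, one_mul,
    Fin.val_succ]

theorem cycCoboundary_twistCochain [DecidableEq Γ] (hσone : ∀ γ : Γ, σ 1 γ = 1 ∧ σ γ 1 = 1)
    (hσcoc : ∀ γ₁ γ₂ γ₃ : Γ, σ (γ₁ * γ₂) γ₃ * σ γ₁ γ₂ = σ γ₁ (γ₂ * γ₃) * σ γ₂ γ₃)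
    (n : ℕ) (τ : (Fin (n + 1) → Γ) → ℂ) :
    cycCoboundary σ n (twistCochain σ n τ)
      = twistCochain σ (n + 1) (cycCoboundary (fun _ _ => (1 : ℂ)) n τ) := by
  funext g
  simp only [cycCoboundary, twistCochain, mul_add, Finset.mul_sum]
  congr 1
  · rw [← Tsigma_cyclicFace hσcoc hσone n g]
    ring
  · refine Finset.sum_congr rfl fun i _ => ?_
    rw [← Tsigma_face hσcoc n g i]
    ring

end Twist

theorem twist_is_chain_map_general {Γ : Type*} [Group Γ] [DecidableEq Γ] (σ : Γ → Γ → ℂ)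
    (hσone : ∀ γ : Γ, σ 1 γ = 1 ∧ σ γ 1 = 1)
    (hσcoc : ∀ γ₁ γ₂ γ₃ : Γ,
      σ (γ₁ * γ₂) γ₃ * σ γ₁ γ₂ = σ γ₁ (γ₂ * γ₃) * σ γ₂ γ₃)
    (n : ℕ) :
    (∀ (m : ℕ) (g : Fin (m + 1) → Γ),
      Tsigma σ m g
        = if (List.ofFn g).prod = 1
          then ∏ j : Fin m, σ (((List.ofFn g).take ((j : ℕ) + 1)).prod) (g j.succ)
          else 0) ∧
    (∀ τ : (Fin (n + 1) → Γ) → ℂ,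
      cycCoboundary σ n (twistCochain σ n τ)
        = twistCochain σ (n + 1) (cycCoboundary (fun _ _ => (1 : ℂ)) n τ)) :=
  ⟨Tsigma_eq_prod σ hσone, cycCoboundary_twistCochain σ hσone hσcoc n⟩

/-- `T_σ(γ₀,…,γ_m)` equals `∏_{j=1}^m σ(γ₀⋯γ_{j−1}, γ_j)` when
`γ₀⋯γ_m = e` and `0` otherwise, and the map `τ ↦ τ^σ` is a chain map:
`B_σ(τ^σ) = (B_1 τ)^σ`, where `B_1` is the coboundary for the trivial
multiplier. -/
theorem twist_is_chain_map {Γ : Type*} [Group Γ] [DecidableEq Γ] (σ : Γ → Γ → ℂ)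
    (hσnorm : ∀ γ μ, ‖σ γ μ‖ = 1)
    (hσone : ∀ γ : Γ, σ 1 γ = 1 ∧ σ γ 1 = 1)
    (hσcoc : ∀ γ₁ γ₂ γ₃ : Γ,
      σ (γ₁ * γ₂) γ₃ * σ γ₁ γ₂ = σ γ₁ (γ₂ * γ₃) * σ γ₂ γ₃)
    (n : ℕ) :
    (∀ (m : ℕ) (g : Fin (m + 1) → Γ),
      Tsigma σ m g
        = if (List.ofFn g).prod = 1
          then ∏ j : Fin m, σ (((List.ofFn g).take ((j : ℕ) + 1)).prod) (g j.succ)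
          else 0) ∧
    (∀ τ : (Fin (n + 1) → Γ) → ℂ,
      cycCoboundary σ n (twistCochain σ n τ)
        = twistCochain σ (n + 1) (cycCoboundary (fun _ _ => (1 : ℂ)) n τ)) :=
  twist_is_chain_map_general σ hσone hσcoc n
end

section
/- Let Γ and G be types, l_Γ : Γ → ℝ and l_G : G → ℝ nonnegative functions (length functions), and k ∈ ℕ. Let v be a linear functional on the space of finitely supported functions Γ → ℂ such that |v(x)|² ≤ Σ_{γ} |x(γ)|²·(1 + l_Γ(γ))^{2k} for every finitely supported x : Γ → ℂ. Then for every finitely supported a : Γ×G → ℂ, writing a_g(γ) := a(γ,g), one has Σ_{g ∈ G} |v(a_g)|²·(1 + l_G(g))^{2k} ≤ Σ_{(γ,g) ∈ Γ×G} |a(γ,g)|²·(1 + l_Γ(γ) + l_G(g))^{4k}. -/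
lemma pow_prod_le_pow {x y : ℝ} (hx : 0 ≤ x) (hy : 0 ≤ y) (k : ℕ) :
    (1 + x) ^ (2 * k) * (1 + y) ^ (2 * k) ≤ (1 + x + y) ^ (4 * k) := by
  have h : (1 + x) * (1 + y) ≤ (1 + x + y) ^ 2 := by nlinarith
  calc (1 + x) ^ (2 * k) * (1 + y) ^ (2 * k)
      = ((1 + x) * (1 + y)) ^ (2 * k) := by rw [mul_pow]
    _ ≤ ((1 + x + y) ^ 2) ^ (2 * k) := pow_le_pow_left₀ (by positivity) h _
    _ = (1 + x + y) ^ (4 * k) := by rw [← pow_mul]; ring_nf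

lemma curry_double_sum {α β M N : Type*} [AddCommMonoid M] [AddCommMonoid N]
    (f : α × β →₀ M) (F : α → β → M → N) :
    (f.curry.sum fun a g => g.sum fun b c => F a b c)
      = f.sum fun p c => F p.1 p.2 c := by
  classical
  rw [Finsupp.sum]
  simp only [Finsupp.sum]
  rw [Finset.sum_sigma']
  refine Finset.sum_nbij' (fun x => (x.1, x.2)) (fun p => ⟨p.1, p.2⟩) ?_ ?_ ?_ ?_ ?_
  · rintro ⟨a, b⟩ hx
    rw [Finset.mem_sigma] at hx
    have := hx.2
    rw [Finsupp.mem_support_iff, Finsupp.curry_apply] at this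
    exact Finsupp.mem_support_iff.2 this
  · rintro ⟨a, b⟩ hp
    rw [Finsupp.mem_support_iff] at hp
    have hcb : f.curry a b ≠ 0 := by rwa [Finsupp.curry_apply]
    refine Finset.mem_sigma.2 ⟨?_, Finsupp.mem_support_iff.2 hcb⟩
    refine Finsupp.mem_support_iff.2 fun h => hcb ?_
    rw [h]; rfl
  · rintro ⟨a, b⟩ _; rfl
  · rintro ⟨a, b⟩ _; rfl
  · rintro ⟨a, b⟩ _
    simp [Finsupp.curry_apply]

/-- Let `l_Γ, l_G` be nonnegative length functions and `v` a
linear functional on finitely supported functions `Γ → ℂ` lying in the unit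
ball of the dual of `H^k_l(Γ)`, i.e.
`|v(x)|² ≤ ∑_γ |x(γ)|²(1 + l_Γ(γ))^{2k}`.  Then for every finitely supported
`a : Γ × G →₀ ℂ`, with `a_g(γ) = a(γ,g)`,
`∑_g |v(a_g)|²(1 + l_G(g))^{2k} ≤ ∑_{(γ,g)} |a(γ,g)|²(1 + l_Γ(γ) + l_G(g))^{4k}`. -/
theorem dual_pairing_product_estimate {Γ G : Type*}
    (lΓ : Γ → ℝ) (lG : G → ℝ)
    (hlΓ : ∀ γ, 0 ≤ lΓ γ) (hlG : ∀ g, 0 ≤ lG g)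
    (k : ℕ)
    (v : (Γ →₀ ℂ) →ₗ[ℂ] ℂ)
    (hv : ∀ x : Γ →₀ ℂ,
      ‖v x‖ ^ 2 ≤ x.sum fun γ c => ‖c‖ ^ 2 * (1 + lΓ γ) ^ (2 * k)) :
    ∀ a : Γ × G →₀ ℂ,
      ((Finsupp.equivMapDomain (Equiv.prodComm Γ G) a).curry.sum
          fun g ag => ‖v ag‖ ^ 2 * (1 + lG g) ^ (2 * k))
        ≤ a.sum fun p c => ‖c‖ ^ 2 * (1 + lΓ p.1 + lG p.2) ^ (4 * k) := by
  intro a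
  set b := Finsupp.equivMapDomain (Equiv.prodComm Γ G) a with hb
  have step1 : (b.curry.sum fun g ag => ‖v ag‖ ^ 2 * (1 + lG g) ^ (2 * k))
      ≤ b.curry.sum fun g ag =>
          ag.sum fun γ c => ‖c‖ ^ 2 * (1 + lΓ γ) ^ (2 * k) * (1 + lG g) ^ (2 * k) := by
    apply Finset.sum_le_sum
    intro g _
    calc ‖v (b.curry g)‖ ^ 2 * (1 + lG g) ^ (2 * k)
        ≤ ((b.curry g).sum fun γ c => ‖c‖ ^ 2 * (1 + lΓ γ) ^ (2 * k)) * (1 + lG g) ^ (2 * k) :=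
          mul_le_mul_of_nonneg_right (hv _) (pow_nonneg (by linarith [hlG g]) _)
      _ = (b.curry g).sum fun γ c => ‖c‖ ^ 2 * (1 + lΓ γ) ^ (2 * k) * (1 + lG g) ^ (2 * k) :=
          Finsupp.sum_mul _ _
  have step2 : (b.curry.sum fun g ag =>
        ag.sum fun γ c => ‖c‖ ^ 2 * (1 + lΓ γ) ^ (2 * k) * (1 + lG g) ^ (2 * k))
      = b.sum fun p c => ‖c‖ ^ 2 * (1 + lΓ p.2) ^ (2 * k) * (1 + lG p.1) ^ (2 * k) :=
    curry_double_sum b fun g γ c => ‖c‖ ^ 2 * (1 + lΓ γ) ^ (2 * k) * (1 + lG g) ^ (2 * k)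
  have step3 : (b.sum fun p c => ‖c‖ ^ 2 * (1 + lΓ p.2) ^ (2 * k) * (1 + lG p.1) ^ (2 * k))
      = a.sum fun p c => ‖c‖ ^ 2 * (1 + lΓ p.1) ^ (2 * k) * (1 + lG p.2) ^ (2 * k) := by
    rw [hb, Finsupp.sum_equivMapDomain]
    rfl
  have step4 : (a.sum fun p c => ‖c‖ ^ 2 * (1 + lΓ p.1) ^ (2 * k) * (1 + lG p.2) ^ (2 * k))
      ≤ a.sum fun p c => ‖c‖ ^ 2 * (1 + lΓ p.1 + lG p.2) ^ (4 * k) := by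
    apply Finset.sum_le_sum
    intro p _
    dsimp only
    rw [mul_assoc]
    exact mul_le_mul_of_nonneg_left (pow_prod_le_pow (hlΓ p.1) (hlG p.2) k) (by positivity)
  linarith [step1, step2 ▸ step3 ▸ step4]
end
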